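/- For N ≥ 2, β ∈ (0, π), and all ε ∈ [0,1), the inclusions Ω_β(ε) ⊆ 𝑇̃Ω_β(ε) ⊆ Ω_β(Aε) ⊆ Ω_β hold, where A = sin β / √(2(1 − cos β)). -/
import Mathlib

open Real


/-- backward: from cone condition `r*cb < x` derive `b*cb < x*sb`. -/
lemma cone_key_bwd (x b r sb cb : ℝ) (hb : 0 ≤ b) (hr : 0 ≤ r)
    (hpyth : x^2 + b^2 = r^2) (hsb : 0 < sb) (hsq : sb^2 + cb^2 = 1)
    (h : r * cb < x) : b * cb < x * sb := by
  rcases le_or_gt cb 0 with h1 | h1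
  · rcases le_or_gt x 0 with h2 | h2
    · -- x ≤ 0, cb ≤ 0, rcb < x ≤ 0
      have hx2 : x^2 < r^2 * cb^2 := by nlinarith
      have hkey : x^2 * sb^2 < b^2 * cb^2 := by nlinarith
      nlinarith [mul_nonpos_of_nonpos_of_nonneg h2 hsb.le,
        mul_nonpos_of_nonneg_of_nonpos hb h1, sq_nonneg (x*sb - b*cb),
        sq_nonneg (x*sb + b*cb)]
    · nlinarith [mul_pos h2 hsb, mul_nonpos_of_nonneg_of_nonpos hb h1]
  · -- cb > 0 : then x > r*cb ≥ 0
    have hx : 0 < x := lt_of_le_of_lt (by positivity) h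
    have hx2 : r^2 * cb^2 < x^2 := by nlinarith [mul_nonneg hr h1.le]
    have hkey : b^2 * cb^2 < x^2 * sb^2 := by nlinarith
    nlinarith [mul_pos hx hsb, mul_nonneg hb h1.le]

/-- forward: from `b*cb < x*sb` derive cone condition `r*cb < x`. -/
lemma cone_key_fwd (x b r sb cb : ℝ) (hb : 0 ≤ b) (hr : 0 ≤ r)
    (hpyth : x^2 + b^2 = r^2) (hsb : 0 < sb) (hsq : sb^2 + cb^2 = 1)
    (h : b * cb < x * sb) : r * cb < x := by
  rcases le_or_gt cb 0 with h1 | h1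
  · rcases le_or_gt x 0 with h2 | h2
    · -- x ≤ 0, cb ≤ 0: then b*cb < x*sb ≤ 0 so bcb < 0
      have hxsb : x * sb ≤ 0 := mul_nonpos_of_nonpos_of_nonneg h2 hsb.le
      have hkey : x^2 * sb^2 < b^2 * cb^2 := by
        nlinarith [mul_nonpos_of_nonneg_of_nonpos hb h1]
      have hx2 : x^2 < r^2 * cb^2 := by nlinarith
      -- from -x ≥ 0, -r*cb ≥ 0, x² < r²cb² : -x < -r*cb
      nlinarith [mul_nonneg hr (neg_nonneg.2 h1), sq_nonneg (x - r*cb), sq_nonneg (x + r*cb)]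
    · -- x > 0 ≥ r*cb unless r*cb = x... r*cb ≤ 0 < x
      nlinarith [mul_nonpos_of_nonneg_of_nonpos hr h1]
  · -- cb > 0: b*cb ≥ 0 so x*sb > 0, x > 0
    have hx : 0 < x := by nlinarith [mul_nonneg hb h1.le]
    have hkey : b^2 * cb^2 < x^2 * sb^2 := by
      nlinarith [mul_nonneg hb h1.le, mul_pos hx hsb]
    have hx2 : r^2 * cb^2 < x^2 := by nlinarith
    nlinarith [mul_nonneg hr h1.le, sq_nonneg (x - r*cb), sq_nonneg (x + r*cb)]

section
variable (s c x0 b r ε : ℝ) (hs : 0 < s) (hc : 0 < c) (hsc : s^2 + c^2 = 1)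
  (hb : 0 ≤ b) (hr : 0 ≤ r) (hpyth : x0^2 + b^2 = r^2) (hε : 0 ≤ ε)

include hs hc hsc hb hr hpyth

/-- Part 1a: points of the truncated cone lie above the tilted hyperplane. -/
lemma geom_L1a (h1 : ε < r) (h2 : r * (c^2 - s^2) < x0) : ε * c - b * s < x0 * c := by
  have hxr : x0 ≤ r := by nlinarith
  have hfac : b^2 * s^2 - (r - x0)^2 * c^2 = (r - x0) * (x0 - r*(c^2-s^2)) := by nlinarith
  have h3 : (r - x0) * c ≤ b * s := by
    nlinarith [mul_nonneg (sub_nonneg.2 hxr) hc.le, mul_nonneg hb hs.le,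
      mul_nonneg (sub_nonneg.2 hxr) (sub_pos.2 h2).le,
      sq_nonneg (b*s - (r-x0)*c), sq_nonneg (b*s + (r-x0)*c)]
  nlinarith [mul_lt_mul_of_pos_right h1 hc]

/-- Part 2 case 1. -/
lemma geom_L2 (hcase : b ≤ ε * (2*s*c)) (h : ε * c - b * s < x0 * c) :
    c * ε < r ∧ r * (c^2 - s^2) < x0 := by
  have hcauchy : x0 * c + b * s ≤ r := by
    nlinarith [sq_nonneg (x0*s - b*c), sq_nonneg (x0*c + b*s - r), sq_nonneg (x0*c + b*s + r)]
  constructor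
  · nlinarith
  · have hstar : b * (c^2 - s^2) < x0 * (2*s*c) := by
      nlinarith [mul_le_mul_of_nonneg_right hcase hc.le, mul_pos hs hc, hc.le]
    exact cone_key_fwd x0 b r (2*s*c) (c^2-s^2) hb hr hpyth (by positivity) (by nlinarith) hstar

include hε in
/-- Part 2 case 2. -/
lemma geom_L3 (hcase : ε * (2*s*c) < b) (h : b * (c^2 - s^2) < x0 * (2*s*c)) :
    c * ε < r ∧ r * (c^2 - s^2) < x0 := by
  have hsb : (0:ℝ) < 2*s*c := by positivity
  have hsq : (2*s*c)^2 + (c^2-s^2)^2 = 1 := by nlinarith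
  refine ⟨?_, cone_key_fwd x0 b r (2*s*c) (c^2-s^2) hb hr hpyth hsb hsq h⟩
  rcases le_or_gt 0 (c^2 - s^2) with h1 | h1
  · have h0 : 0 ≤ b * (c^2-s^2) := mul_nonneg hb h1
    have hx0p : 0 < x0 * (2*s*c) := lt_of_le_of_lt h0 h
    have hsq2 : b^2*(c^2-s^2)^2 ≤ x0^2*(2*s*c)^2 := by
      nlinarith [mul_pos (sub_pos.2 h) (show (0:ℝ) < x0*(2*s*c) + b*(c^2-s^2) by linarith)]
    have hkey : b^2 ≤ r^2 * (2*s*c)^2 := by nlinarith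
    have hrb : b ≤ r * (2*s*c) := by
      nlinarith [mul_nonneg hr hsb.le, sq_nonneg (b - r*(2*s*c)), sq_nonneg (b + r*(2*s*c))]
    have hrε : ε < r := lt_of_mul_lt_mul_right (lt_of_lt_of_le hcase hrb) hsb.le
    nlinarith [mul_le_mul_of_nonneg_right (show c ≤ 1 by nlinarith) hε]
  · have hshalf : (1:ℝ)/2 < s := by nlinarith
    have hrb : b ≤ r := by nlinarith
    nlinarith [mul_nonneg (mul_nonneg hε hs.le) hc.le, mul_nonneg hε hc.le]

end

lemma coord_sq_le (N : ℕ) (x : EuclideanSpace ℝ (Fin N)) (i : Fin N) :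
    (x i)^2 ≤ ‖x‖^2 := by
  have hn : ‖x‖^2 = ∑ j, (x j)^2 := by
    rw [EuclideanSpace.norm_eq, Real.sq_sqrt (by positivity)]
    simp [Real.norm_eq_abs, sq_abs]
  rw [hn]
  exact Finset.single_le_sum (f := fun j => (x j)^2) (fun j _ => sq_nonneg _)
    (Finset.mem_univ _)

/-- for all `ε ∈ [0,1)`, the inclusions
`Ω_β(ε) ⊆ 𝑇̃Ω_β(ε) ⊆ Ω_β(Aε) ⊆ Ω_β` hold, where `A = sin β / √(2(1-cos β))`. -/
theorem cone_inclusions (N : ℕ) (hN : 2 ≤ N) (β : ℝ) (hβ : β ∈ Set.Ioo 0 π)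
    (Ω : ℝ → Set (EuclideanSpace ℝ (Fin N)))
    (hΩ : ∀ δ, Ω δ = {x | δ < ‖x‖ ∧ ‖x‖ < 1 ∧ ‖x‖ * Real.cos β < x ⟨0, by omega⟩})
    (g : ℝ → ℝ → ℝ)
    (hg : ∀ ε b : ℝ, g ε b =
      if b ≤ ε * Real.sin β then ε - b * Real.tan (β / 2)
      else b * (Real.cos β / Real.sin β))
    (T : ℝ → Set (EuclideanSpace ℝ (Fin N)))
    (hT : ∀ ε, T ε = {x | g ε (Real.sqrt (‖x‖ ^ 2 - (x ⟨0, by omega⟩) ^ 2)) < x ⟨0, by omega⟩ ∧ ‖x‖ < 1})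
    (A : ℝ) (hA : A = Real.sin β / Real.sqrt (2 * (1 - Real.cos β)))
    (ε : ℝ) (hε : 0 ≤ ε) (hε1 : ε < 1) :
    Ω ε ⊆ T ε ∧ T ε ⊆ Ω (A * ε) ∧ Ω (A * ε) ⊆ Ω 0 := by
  obtain ⟨hβ0, hβπ⟩ := hβ
  set s := Real.sin (β/2) with hs_def
  set c := Real.cos (β/2) with hc_def
  have hs : 0 < s := Real.sin_pos_of_pos_of_lt_pi (by linarith) (by linarith [Real.pi_pos])
  have hc : 0 < c := Real.cos_pos_of_mem_Ioo ⟨by linarith [Real.pi_pos], by linarith⟩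
  have hsc : s^2 + c^2 = 1 := Real.sin_sq_add_cos_sq _
  have hβeq : β = 2 * (β/2) := by ring
  have hcosβ : Real.cos β = c^2 - s^2 := by
    have h2 := Real.cos_two_mul (β/2)
    rw [show 2*(β/2) = β by ring] at h2
    rw [hs_def, hc_def]
    nlinarith [Real.sin_sq_add_cos_sq (β/2)]
  have hsinβ : Real.sin β = 2*s*c := by
    have h2 := Real.sin_two_mul (β/2)
    rw [show 2*(β/2) = β by ring] at h2
    rw [hs_def, hc_def]
    linarith
  have htan : Real.tan (β/2) = s / c := Real.tan_eq_sin_div_cos _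
  have hAc : A = c := by
    rw [hA, hsinβ]
    have h2 : 2*(1 - Real.cos β) = (2*s)^2 := by rw [hcosβ]; nlinarith
    rw [h2, Real.sqrt_sq (by linarith)]
    field_simp <;> ring
  refine ⟨?_, ?_, ?_⟩
  · -- Ω ε ⊆ T ε
    intro x hx
    rw [hΩ] at hx
    rw [hT]
    simp only [Set.mem_setOf_eq] at hx ⊢
    obtain ⟨hx1, hx2, hx3⟩ := hx
    refine ⟨?_, hx2⟩
    set x0 : ℝ := x ⟨0, by omega⟩ with hx0def
    set b : ℝ := Real.sqrt (‖x‖^2 - x0^2) with hbdef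
    have hb : 0 ≤ b := Real.sqrt_nonneg _
    have hb2 : b^2 = ‖x‖^2 - x0^2 :=
      Real.sq_sqrt (by linarith [coord_sq_le N x ⟨0, by omega⟩])
    have hpyth : x0^2 + b^2 = ‖x‖^2 := by linarith
    have hr : (0:ℝ) ≤ ‖x‖ := norm_nonneg x
    have hx3' : ‖x‖ * (c^2 - s^2) < x0 := by rw [← hcosβ]; exact hx3
    rw [hg]
    split_ifs with hcase
    · -- tilted plane
      have hkey : ε * c - b * s < x0 * c :=
        geom_L1a s c x0 b ‖x‖ ε hs hc hsc hb hr hpyth hx1 hx3'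
      rw [htan]
      rw [show ε - b * (s/c) = (ε * c - b * s)/c by field_simp <;> ring]
      rw [div_lt_iff₀ hc]
      exact hkey
    · -- cone side
      have hkey : b * (c^2 - s^2) < x0 * (2*s*c) :=
        cone_key_bwd x0 b ‖x‖ (2*s*c) (c^2-s^2) hb hr hpyth (by positivity)
          (by nlinarith) hx3'
      rw [hcosβ, hsinβ]
      rw [show b * ((c^2-s^2) / (2*s*c)) = (b * (c^2-s^2))/(2*s*c) by ring]
      rw [div_lt_iff₀ (by positivity)]
      exact hkey
  · -- T ε ⊆ Ω (A ε)
    intro x hx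
    rw [hT] at hx
    rw [hΩ]
    simp only [Set.mem_setOf_eq] at hx ⊢
    obtain ⟨hx1, hx2⟩ := hx
    set x0 : ℝ := x ⟨0, by omega⟩ with hx0def
    set b : ℝ := Real.sqrt (‖x‖^2 - x0^2) with hbdef
    have hb : 0 ≤ b := Real.sqrt_nonneg _
    have hb2 : b^2 = ‖x‖^2 - x0^2 :=
      Real.sq_sqrt (by linarith [coord_sq_le N x ⟨0, by omega⟩])
    have hpyth : x0^2 + b^2 = ‖x‖^2 := by linarith
    have hr : (0:ℝ) ≤ ‖x‖ := norm_nonneg x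
    rw [hg] at hx1
    have main : c * ε < ‖x‖ ∧ ‖x‖ * (c^2 - s^2) < x0 := by
      split_ifs at hx1 with hcase
      · rw [htan] at hx1
        have h' : ε * c - b * s < x0 * c := by
          rw [show ε - b * (s/c) = (ε * c - b * s)/c by field_simp <;> ring,
            div_lt_iff₀ hc] at hx1
          exact hx1
        exact geom_L2 s c x0 b ‖x‖ ε hs hc hsc hb hr hpyth
          (by rw [hsinβ] at hcase; exact hcase) h'
      · rw [hcosβ, hsinβ,
          show b * ((c^2-s^2) / (2*s*c)) = (b * (c^2-s^2))/(2*s*c) by ring,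
          div_lt_iff₀ (by positivity)] at hx1
        exact geom_L3 s c x0 b ‖x‖ ε hs hc hsc hb hr hpyth hε
          (by rw [hsinβ] at hcase; push_neg at hcase; exact hcase) hx1
    refine ⟨by rw [hAc]; exact main.1, hx2, by rw [hcosβ]; exact main.2⟩
  · -- Ω (A ε) ⊆ Ω 0
    intro x hx
    rw [hΩ] at hx ⊢
    simp only [Set.mem_setOf_eq] at hx ⊢
    have hA0 : 0 ≤ A * ε := by rw [hAc]; positivity
    exact ⟨lt_of_le_of_lt hA0 hx.1, hx.2.1, hx.2.2⟩
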